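/- arXiv:0806.1363 — 3 statements merged into one kernel-verified Lean document; each statement's English description precedes it below -/
import Mathlib

section
/- If σ_s'(1) ≥ 0 and F_l solves F_l'' + (2/r)F_l' − ((l²+l)/r²)F_l = f'(σ_s)F_l on (0,1) with F_l bounded near 0 and F_l(1) = −σ_s'(1) ≤ 0, and f'(σ_s(r)) > 0 for all r, then F_l(r) ≤ 0 for all r ∈ (0,1]. -/
/-!
With `g r = r² F'(r)` the equation reads `g' = (r² c + k) F`, so `g` is strictly increasing on
every interval where `F > 0`. If `F` took a positive value, its maximum over `[0, 1]` would be
positive, hence attained at some `r₀ < 1` with `F > 0` on some `[r₀, u)`. For `r₀ > 0` we have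
`g r₀ = 0`; for `r₀ = 0`, a negative value of `g` near `0` would give `F' ≤ -m / r²` there, and `F`
would blow up at `0`. Either way `g > 0`, hence `F' > 0`, on `(r₀, u)`: `F` increases past its
maximum.
-/

open Set Filter Topology

theorem tendsto_atTop_of_sq_mul_deriv_le_neg {F : ℝ → ℝ} {s m : ℝ} (hs : 0 < s) (hm : 0 < m)
    (hFc : ContinuousOn F (Ioc 0 s)) (hFd : DifferentiableOn ℝ F (Ioo 0 s))
    (hder : ∀ x ∈ Ioo 0 s, x ^ 2 * deriv F x ≤ -m) :
    Tendsto F (𝓝[>] 0) atTop := by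
  have hanti : AntitoneOn (fun x => F x - m * x⁻¹) (Ioc 0 s) := by
    refine antitoneOn_of_deriv_nonpos (convex_Ioc 0 s)
      (hFc.sub (continuousOn_const.mul (continuousOn_inv₀.mono fun x hx => hx.1.ne'))) ?_ ?_
      <;> rw [interior_Ioc]
    · exact hFd.sub ((differentiableOn_inv.mono fun x hx => hx.1.ne').const_mul m)
    · intro x hx
      have hx2 : 0 < x ^ 2 := pow_pos hx.1 2
      have hd : HasDerivAt (fun x => F x - m * x⁻¹) (deriv F x - m * -(x ^ 2)⁻¹) x :=
        (hFd.differentiableAt (isOpen_Ioo.mem_nhds hx)).hasDerivAt.sub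
          ((hasDerivAt_inv hx.1.ne').const_mul m)
      rw [hd.deriv]
      have : deriv F x ≤ -m / x ^ 2 := (le_div_iff₀ hx2).2 (by linarith [hder x hx])
      rw [div_eq_mul_inv] at this
      linarith
  have hlower : ∀ x ∈ Ioc 0 s, F s - m * s⁻¹ + m * x⁻¹ ≤ F x := fun x hx => by
    linarith [hanti hx (right_mem_Ioc.2 hs) hx.2]
  refine tendsto_atTop_mono' _ ?_
    (tendsto_atTop_add_const_left _ (F s - m * s⁻¹) (tendsto_inv_nhdsGT_zero.const_mul_atTop hm))
  filter_upwards [Ioc_mem_nhdsGT hs] with x hx using hlower x hx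

theorem hasDerivAt_deriv_of_contDiffOn_two {F : ℝ → ℝ} {s : Set ℝ} {x : ℝ} (hs : IsOpen s)
    (hF : ContDiffOn ℝ 2 F s) (hx : x ∈ s) : HasDerivAt (deriv F) (deriv (deriv F) x) x :=
  (((hF.deriv_of_isOpen (m := 1) hs (by norm_num)).differentiableOn (by norm_num)) x hx
    |>.differentiableAt (hs.mem_nhds hx)).hasDerivAt

theorem hasDerivAt_sq_mul_deriv_of_ode {F c : ℝ → ℝ} {k x : ℝ} (hx : x ≠ 0)
    (hF : HasDerivAt (deriv F) (deriv (deriv F) x) x)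
    (hode : deriv (deriv F) x + (2 / x) * deriv F x - (k / x ^ 2) * F x = c x * F x) :
    HasDerivAt (fun y => y ^ 2 * deriv F y) ((x ^ 2 * c x + k) * F x) x := by
  refine ((hasDerivAt_pow 2 x).mul hF).congr_deriv ?_
  rw [show deriv (deriv F) x = c x * F x + k / x ^ 2 * F x - 2 / x * deriv F x by linarith]
  field_simp
  ring

def SolvesRadialEq (F c : ℝ → ℝ) (k : ℝ) : Prop :=
  ∀ r ∈ Ioo (0:ℝ) 1, deriv (deriv F) r + (2 / r) * deriv F r - (k / r ^ 2) * F r = c r * F r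

section RadialEq

variable {F c : ℝ → ℝ} {k : ℝ}

theorem sq_mul_deriv_lt_of_pos (hk : 0 ≤ k) (hF : ContDiffOn ℝ 2 F (Ioo 0 1))
    (hode : SolvesRadialEq F c k) (hc : ∀ r ∈ Ioo (0:ℝ) 1, 0 < c r) {p q : ℝ} (hp : 0 < p)
    (hpq : p < q) (hq : q < 1) (hFpos : ∀ x ∈ Ioo p q, 0 < F x) :
    p ^ 2 * deriv F p < q ^ 2 * deriv F q := by
  have hsub : Icc p q ⊆ Ioo 0 1 := Icc_subset_Ioo hp hq
  have hg : ∀ x ∈ Ioo (0:ℝ) 1,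
      HasDerivAt (fun y => y ^ 2 * deriv F y) ((x ^ 2 * c x + k) * F x) x := fun x hx =>
    hasDerivAt_sq_mul_deriv_of_ode hx.1.ne'
      (hasDerivAt_deriv_of_contDiffOn_two isOpen_Ioo hF hx) (hode x hx)
  have hmono : StrictMonoOn (fun y => y ^ 2 * deriv F y) (Icc p q) := by
    refine strictMonoOn_of_deriv_pos (convex_Icc p q)
      (fun x hx => (hg x (hsub hx)).continuousAt.continuousWithinAt) fun x hx => ?_
    rw [interior_Icc] at hx
    have hx01 := hsub (Ioo_subset_Icc_self hx)
    rw [(hg x hx01).deriv]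
    exact mul_pos (add_pos_of_pos_of_nonneg (mul_pos (pow_pos hx01.1 2) (hc x hx01)) hk)
      (hFpos x hx)
  exact hmono (left_mem_Icc.2 hpq.le) (right_mem_Icc.2 hpq.le) hpq

theorem sq_mul_deriv_pos_of_isLocalMax (hk : 0 ≤ k) (hF : ContDiffOn ℝ 2 F (Ioo 0 1))
    (hode : SolvesRadialEq F c k) (hc : ∀ r ∈ Ioo (0:ℝ) 1, 0 < c r) {r₀ u : ℝ} (hr₀ : 0 < r₀)
    (hmax : IsLocalMax F r₀) (hu : u ≤ 1) (hFpos : ∀ x ∈ Ioo r₀ u, 0 < F x) :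
    ∀ x ∈ Ioo r₀ u, 0 < x ^ 2 * deriv F x := fun x hx => by
  have := sq_mul_deriv_lt_of_pos hk hF hode hc hr₀ hx.1 (hx.2.trans_le hu)
    fun y hy => hFpos y ⟨hy.1, hy.2.trans hx.2⟩
  rwa [hmax.deriv_eq_zero, mul_zero] at this

theorem sq_mul_deriv_pos_near_zero (hk : 0 ≤ k) (hF : ContDiffOn ℝ 2 F (Ioo 0 1))
    (hode : SolvesRadialEq F c k) (hc : ∀ r ∈ Ioo (0:ℝ) 1, 0 < c r)
    (hF₀ : ContinuousWithinAt F (Ioi 0) 0) {u : ℝ}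
    (hu : u ≤ 1) (hFpos : ∀ x ∈ Ioo 0 u, 0 < F x) :
    ∀ x ∈ Ioo 0 u, 0 < x ^ 2 * deriv F x := by
  intro x hx
  by_contra! hgx
  obtain ⟨s, hs, hsx⟩ := exists_between hx.1
  have hg_lt : ∀ y ∈ Ioo 0 x, ∀ z ∈ Ioc y x, y ^ 2 * deriv F y < z ^ 2 * deriv F z :=
    fun y hy z hz =>
      sq_mul_deriv_lt_of_pos hk hF hode hc hy.1 hz.1 (hz.2.trans_lt (hx.2.trans_le hu))
      fun w hw => hFpos w ⟨hy.1.trans hw.1, hw.2.trans_le (hz.2.trans hx.2.le)⟩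
  have hgs : s ^ 2 * deriv F s < 0 := (hg_lt s ⟨hs, hsx⟩ x ⟨hsx, le_rfl⟩).trans_le hgx
  have hsub : Ioc 0 s ⊆ Ioo 0 1 := fun y hy => ⟨hy.1, hy.2.trans_lt (hsx.trans (hx.2.trans_le hu))⟩
  have hblowup : Tendsto F (𝓝[>] 0) atTop :=
    tendsto_atTop_of_sq_mul_deriv_le_neg hs (neg_pos.2 hgs)
      (hF.continuousOn.mono hsub)
      ((hF.differentiableOn (by norm_num)).mono (Ioo_subset_Ioc_self.trans hsub))
      fun y hy => by rw [neg_neg]; exact (hg_lt y ⟨hy.1, hy.2.trans hsx⟩ s ⟨hy.2, hsx.le⟩).le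
  exact not_tendsto_atTop_of_tendsto_nhds hF₀ hblowup

theorem nonpos_of_radial_ode (hk : 0 ≤ k) (hF : ContDiffOn ℝ 2 F (Ioo 0 1))
    (hFc : ContinuousOn F (Icc 0 1)) (hode : SolvesRadialEq F c k)
    (hc : ∀ r ∈ Ioo (0:ℝ) 1, 0 < c r) (hF₁ : F 1 ≤ 0) :
    ∀ r ∈ Icc (0:ℝ) 1, F r ≤ 0 := by
  by_contra! ⟨b, hb, hFb⟩
  obtain ⟨r₀, hr₀, hmax⟩ := isCompact_Icc.exists_isMaxOn ⟨b, hb⟩ hFc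
  have hFr₀ : 0 < F r₀ := hFb.trans_le (hmax hb)
  have hr₀1 : r₀ < 1 := hr₀.2.lt_of_ne fun h => by rw [h] at hFr₀; linarith
  obtain ⟨u, hr₀u, hu1, hFpos⟩ : ∃ u, r₀ < u ∧ u ≤ 1 ∧ ∀ x ∈ Ico r₀ u, 0 < F x := by
    have hcont : ContinuousWithinAt F (Ici r₀) r₀ :=
      (hFc r₀ hr₀).mono_of_mem_nhdsWithin (Icc_mem_nhdsGE_of_mem ⟨hr₀.1, hr₀1⟩)
    obtain ⟨u, hu, hsub⟩ :=
      mem_nhdsGE_iff_exists_Ico_subset.1 (hcont.eventually (lt_mem_nhds hFr₀))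
    exact ⟨min u 1, lt_min hu hr₀1, min_le_right _ _,
      fun x hx => hsub ⟨hx.1, hx.2.trans_le (min_le_left _ _)⟩⟩
  have hg : ∀ x ∈ Ioo r₀ u, 0 < x ^ 2 * deriv F x := by
    rcases hr₀.1.eq_or_lt with h | h
    · subst h
      exact sq_mul_deriv_pos_near_zero hk hF hode hc
        ((hFc 0 hr₀).mono_of_mem_nhdsWithin (Icc_mem_nhdsGT_of_mem ⟨le_rfl, zero_lt_one⟩))
        hu1 fun x hx => hFpos x (Ioo_subset_Ico_self hx)
    · exact sq_mul_deriv_pos_of_isLocalMax hk hF hode hc h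
        (hmax.localize.isLocalMax (Icc_mem_nhds h hr₀1)) hu1
        fun x hx => hFpos x (Ioo_subset_Ico_self hx)
  obtain ⟨x, hx⟩ : (Ioo r₀ u).Nonempty := nonempty_Ioo.2 hr₀u
  have hmono : StrictMonoOn F (Icc r₀ x) := by
    refine strictMonoOn_of_deriv_pos (convex_Icc r₀ x)
      (hFc.mono (Icc_subset_Icc hr₀.1 (hx.2.le.trans hu1))) fun y hy => ?_
    rw [interior_Icc] at hy
    exact pos_of_mul_pos_right (hg y ⟨hy.1, hy.2.trans hx.2⟩) (by positivity)
  exact (hmono (left_mem_Icc.2 hx.1.le) (right_mem_Icc.2 hx.1.le) hx.1).not_ge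
    (hmax ⟨hr₀.1.trans hx.1.le, hx.2.le.trans hu1⟩)

end RadialEq

/-- Maximum principle for the radial linearized equation: if `σ_s'(1) ≥ 0`,
`F` solves `F'' + (2/r) F' - ((l²+l)/r²) F = f'(σ_s) F` on `(0,1)`, is bounded near `0`
(encoded as continuity on `[0,1]`), `F(1) = -σ_s'(1) ≤ 0`, and `f'(σ_s(r)) > 0` for all `r`,
then `F ≤ 0` on `(0,1]`. -/
theorem stmt_4 (f σs F : ℝ → ℝ) (l : ℕ)
    (hσ'1 : 0 ≤ deriv σs 1)
    (hF2 : ContDiffOn ℝ 2 F (Set.Ioc 0 1))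
    (hFc : ContinuousOn F (Set.Icc 0 1))
    (hODE : ∀ r ∈ Set.Ioo (0:ℝ) 1,
      deriv (deriv F) r + (2 / r) * deriv F r - (((l:ℝ)^2 + l) / r^2) * F r
        = deriv f (σs r) * F r)
    (hF1 : F 1 = -deriv σs 1)
    (hc : ∀ r ∈ Set.Icc (0:ℝ) 1, 0 < deriv f (σs r)) :
    ∀ r ∈ Set.Ioc (0:ℝ) 1, F r ≤ 0 := fun r hr =>
  nonpos_of_radial_ode (by positivity) (hF2.mono Ioo_subset_Ioc_self) hFc hODE
    (fun r hr => hc r (Ioo_subset_Icc_self hr)) (by linarith) r (Ioc_subset_Icc_self hr)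
end

section
/- Let χ ∈ C^∞[0,∞) satisfy 0 ≤ χ ≤ 1, χ(τ)=1 for |τ| ≤ δ, χ(τ)=0 for |τ| ≥ 3δ, and |χ'(τ)| ≤ 2/(3δ), and let u : ℝ³ → ℝ be C¹ with ‖u‖_{C¹} < δ where 0 < δ < 1/6. Then the map Φ(x) = x + χ(|x|−1) u(x) x/|x| (extended by Φ(x) = x near 0) is a C¹ diffeomorphism of ℝ³ onto itself, and Φ(x) = x whenever dist(x, S²) > 3δ. -/
open Real

noncomputable section

variable {E : Type*} [NormedAddCommGroup E] [InnerProductSpace ℝ E]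

local notation "⟪" x ", " y "⟫" => @inner ℝ _ _ x y

lemma aux_hasFDerivAt_norm {x : E} (hx : x ≠ 0) :
    HasFDerivAt (fun y : E => ‖y‖) (‖x‖⁻¹ • innerSL ℝ x) x := by
  have hns : 0 < ‖x‖ := norm_pos_iff.2 hx
  have h1 : HasFDerivAt (fun y : E => ‖y‖ ^ 2) (2 • innerSL ℝ x) x :=
    (hasStrictFDerivAt_norm_sq x).hasFDerivAt
  have h2 : HasDerivAt Real.sqrt (1 / (2 * Real.sqrt (‖x‖ ^ 2))) (‖x‖ ^ 2) :=
    Real.hasDerivAt_sqrt (by positivity)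
  have h3 := h2.comp_hasFDerivAt x h1
  have h4 : (Real.sqrt ∘ fun y : E => ‖y‖ ^ 2) = fun y : E => ‖y‖ := by
    funext y; exact Real.sqrt_sq (norm_nonneg y)
  rw [h4] at h3
  convert h3 using 1
  · rfl
  · rfl
  rw [Real.sqrt_sq hns.le]
  ext v
  simp only [ContinuousLinearMap.coe_smul', Pi.smul_apply, smul_eq_mul]
  ring

set_option maxHeartbeats 1000000 in
/-- The far-from-origin derivative estimate. -/
lemma aux_far (δ : ℝ) (hδ : 0 < δ) (hδ' : δ < 1/6)
    (χ : ℝ → ℝ) (hχs : ContDiff ℝ (⊤ : ℕ∞) χ)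
    (hχ01 : ∀ τ : ℝ, 0 ≤ χ τ ∧ χ τ ≤ 1)
    (hχ' : ∀ τ : ℝ, |deriv χ τ| ≤ 2 / (3 * δ))
    (u : E → ℝ) (hu : ContDiff ℝ 1 u)
    (husmall : ∀ x, |u x| < δ ∧ ‖fderiv ℝ u x‖ < δ)
    {x : E} (hr : (1:ℝ)/2 ≤ ‖x‖) :
    ∃ L : E →L[ℝ] E,
      HasFDerivAt (fun y : E => (χ (‖y‖ - 1) * u y) • (‖y‖⁻¹ • y)) L x ∧ ‖L‖ ≤ 9/10 := by
  have hns : 0 < ‖x‖ := lt_of_lt_of_le (by norm_num) hr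
  have hx : x ≠ 0 := norm_pos_iff.1 hns
  have hr0 : ‖x‖ ≠ 0 := hns.ne'
  set N : E →L[ℝ] ℝ := ‖x‖⁻¹ • innerSL ℝ x with hN
  have n1 : HasFDerivAt (fun y : E => ‖y‖) N x := aux_hasFDerivAt_norm hx
  have n2 : HasFDerivAt (fun y : E => ‖y‖ - 1) N x := n1.sub_const 1
  have c1 : HasDerivAt χ (deriv χ (‖x‖ - 1)) (‖x‖ - 1) :=
    ((hχs.differentiable (by simp)) (‖x‖ - 1)).hasDerivAt
  have c2 : HasFDerivAt (fun y : E => χ (‖y‖ - 1)) (deriv χ (‖x‖ - 1) • N) x :=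
    c1.comp_hasFDerivAt x n2
  have u1 : HasFDerivAt u (fderiv ℝ u x) x :=
    ((hu.differentiable one_ne_zero) x).hasFDerivAt
  set F' : E →L[ℝ] ℝ := χ (‖x‖ - 1) • fderiv ℝ u x + u x • (deriv χ (‖x‖ - 1) • N) with hF'
  have F1 : HasFDerivAt (fun y : E => χ (‖y‖ - 1) * u y) F' x := c2.mul u1
  have i0 : HasDerivAt (fun t : ℝ => t⁻¹) (-(‖x‖ ^ 2)⁻¹) ‖x‖ := hasDerivAt_inv hr0
  have i1 : HasFDerivAt (fun y : E => ‖y‖⁻¹) ((-(‖x‖ ^ 2)⁻¹) • N) x :=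
    i0.comp_hasFDerivAt x n1
  set G' : E →L[ℝ] E := ‖x‖⁻¹ • ContinuousLinearMap.id ℝ E
      + ((-(‖x‖ ^ 2)⁻¹) • N).smulRight x with hG'
  have g1 : HasFDerivAt (fun y : E => ‖y‖⁻¹ • y) G' x := i1.smul (hasFDerivAt_id x)
  set L : E →L[ℝ] E := (χ (‖x‖ - 1) * u x) • G' + F'.smulRight (‖x‖⁻¹ • x) with hL
  have h1 : HasFDerivAt (fun y : E => (χ (‖y‖ - 1) * u y) • (‖y‖⁻¹ • y)) L x := F1.smul g1
  refine ⟨L, h1, ?_⟩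
  -- pointwise formulas
  have hNv : ∀ v : E, N v = ‖x‖⁻¹ * ⟪x, v⟫ := by intro v; simp [hN]
  have hGv : ∀ v : E, G' v = ‖x‖⁻¹ • v + ((-(‖x‖ ^ 2)⁻¹) * N v) • x := by
    intro v; simp [hG']
  -- orthogonality
  have horth : ∀ v : E, ⟪x, G' v⟫ = 0 := by
    intro v
    rw [hGv v, inner_add_right, real_inner_smul_right, real_inner_smul_right,
      real_inner_self_eq_norm_sq, hNv]
    field_simp
    ring
  -- bound on G'
  have hGb : ∀ v : E, ‖G' v‖ ≤ ‖x‖⁻¹ * ‖v‖ := by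
    intro v
    have hgx : ⟪G' v, x⟫ = 0 := by rw [real_inner_comm]; exact horth v
    have e1 : ⟪G' v, G' v⟫ = ‖x‖⁻¹ * ⟪G' v, v⟫ := by
      have e0 : ⟪G' v, G' v⟫ = ⟪G' v, ‖x‖⁻¹ • v + (-(‖x‖ ^ 2)⁻¹ * N v) • x⟫ := by
        rw [← hGv v]
      rw [e0, inner_add_right, real_inner_smul_right, real_inner_smul_right, hgx]
      ring
    have e2 : ‖G' v‖ ^ 2 = ‖x‖⁻¹ * ⟪G' v, v⟫ := by
      rw [← real_inner_self_eq_norm_sq]; exact e1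
    have e3 : ⟪G' v, v⟫ ≤ ‖G' v‖ * ‖v‖ := real_inner_le_norm _ _
    rcases eq_or_lt_of_le (norm_nonneg (G' v)) with h0 | h0
    · rw [← h0]; positivity
    · have : ‖G' v‖ ^ 2 ≤ ‖x‖⁻¹ * (‖G' v‖ * ‖v‖) := by
        rw [e2]
        exact mul_le_mul_of_nonneg_left e3 (by positivity)
      nlinarith
  -- bound on F'
  have hFb : ∀ v : E, |F' v| ≤ (2/3 + δ) * ‖v‖ := by
    intro v
    have hFv : F' v = χ (‖x‖ - 1) * (fderiv ℝ u x v) + u x * (deriv χ (‖x‖ - 1) * N v) := by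
      simp [hF']
    have b1 : |χ (‖x‖ - 1) * (fderiv ℝ u x v)| ≤ δ * ‖v‖ := by
      rw [abs_mul]
      have h1 : |χ (‖x‖ - 1)| ≤ 1 := by
        rw [abs_le]; constructor
        · linarith [(hχ01 (‖x‖ - 1)).1]
        · exact (hχ01 (‖x‖ - 1)).2
      have h2 : |fderiv ℝ u x v| ≤ δ * ‖v‖ := by
        calc |fderiv ℝ u x v| ≤ ‖fderiv ℝ u x‖ * ‖v‖ := (fderiv ℝ u x).le_opNorm v
        _ ≤ δ * ‖v‖ := by
          apply mul_le_mul_of_nonneg_right (le_of_lt (husmall x).2) (norm_nonneg v)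
      calc |χ (‖x‖ - 1)| * |fderiv ℝ u x v| ≤ 1 * (δ * ‖v‖) := by
            apply mul_le_mul h1 h2 (abs_nonneg _) (by norm_num)
      _ = δ * ‖v‖ := by ring
    have b2 : |u x * (deriv χ (‖x‖ - 1) * N v)| ≤ 2/3 * ‖v‖ := by
      have hNvb : |N v| ≤ ‖v‖ := by
        rw [hNv, abs_mul, abs_inv, abs_norm]
        calc ‖x‖⁻¹ * |⟪x, v⟫| ≤ ‖x‖⁻¹ * (‖x‖ * ‖v‖) := by
              apply mul_le_mul_of_nonneg_left (abs_real_inner_le_norm x v) (by positivity)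
        _ = ‖v‖ := by field_simp
      rw [abs_mul, abs_mul]
      calc |u x| * (|deriv χ (‖x‖ - 1)| * |N v|) ≤ δ * (2 / (3 * δ) * ‖v‖) := by
            apply mul_le_mul (le_of_lt (husmall x).1)
            · apply mul_le_mul (hχ' _) hNvb (abs_nonneg _) (by positivity)
            · positivity
            · exact hδ.le
      _ = 2/3 * ‖v‖ := by field_simp
    calc |F' v| ≤ |χ (‖x‖ - 1) * (fderiv ℝ u x v)| + |u x * (deriv χ (‖x‖ - 1) * N v)| := by
          rw [hFv]; exact abs_add_le _ _
    _ ≤ δ * ‖v‖ + 2/3 * ‖v‖ := add_le_add b1 b2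
    _ = (2/3 + δ) * ‖v‖ := by ring
  -- final bound
  apply ContinuousLinearMap.opNorm_le_bound _ (by norm_num)
  intro v
  have hLv : L v = (χ (‖x‖ - 1) * u x) • G' v + (F' v) • (‖x‖⁻¹ • x) := by simp [hL]
  have hgx2 : ⟪G' v, x⟫ = 0 := by rw [real_inner_comm]; exact horth v
  have horth2 : ⟪(χ (‖x‖ - 1) * u x) • G' v, (F' v) • (‖x‖⁻¹ • x)⟫ = 0 := by
    rw [real_inner_smul_left, real_inner_smul_right, real_inner_smul_right, hgx2]
    ring
  have hsq : ‖L v‖ ^ 2 = ‖(χ (‖x‖ - 1) * u x) • G' v‖ ^ 2 + ‖(F' v) • (‖x‖⁻¹ • x)‖ ^ 2 := by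
    rw [hLv, @norm_add_sq_real, horth2]; ring
  have t1 : ‖(χ (‖x‖ - 1) * u x) • G' v‖ ≤ 2 * δ * ‖v‖ := by
    rw [norm_smul]
    have hc : |χ (‖x‖ - 1) * u x| ≤ δ := by
      rw [abs_mul]
      calc |χ (‖x‖ - 1)| * |u x| ≤ 1 * δ := by
            apply mul_le_mul _ (le_of_lt (husmall x).1) (abs_nonneg _) (by norm_num)
            rw [abs_le]; exact ⟨by linarith [(hχ01 (‖x‖ - 1)).1], (hχ01 (‖x‖ - 1)).2⟩
      _ = δ := one_mul δ
    have hinv : ‖x‖⁻¹ ≤ 2 := by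
      rw [inv_le_comm₀ hns (by norm_num)]; linarith
    calc ‖χ (‖x‖ - 1) * u x‖ * ‖G' v‖ ≤ δ * (‖x‖⁻¹ * ‖v‖) := by
          apply mul_le_mul hc (hGb v) (norm_nonneg _) hδ.le
    _ ≤ δ * (2 * ‖v‖) := by
          apply mul_le_mul_of_nonneg_left _ hδ.le
          apply mul_le_mul_of_nonneg_right hinv (norm_nonneg v)
    _ = 2 * δ * ‖v‖ := by ring
  have t2 : ‖(F' v) • (‖x‖⁻¹ • x)‖ ≤ (2/3 + δ) * ‖v‖ := by
    rw [norm_smul, norm_smul, norm_inv, norm_norm, inv_mul_cancel₀ hr0, mul_one]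
    exact (le_of_eq (Real.norm_eq_abs _)).trans (hFb v)
  have hfin : ‖L v‖ ^ 2 ≤ ((2 * δ * ‖v‖) ^ 2 + ((2/3 + δ) * ‖v‖) ^ 2) := by
    rw [hsq]
    apply add_le_add
    · exact pow_le_pow_left₀ (norm_nonneg _) t1 2
    · exact pow_le_pow_left₀ (norm_nonneg _) t2 2
  have hscalar : (2 * δ) ^ 2 + (2/3 + δ) ^ 2 ≤ (9/10) ^ 2 := by
    nlinarith [hδ.le, hδ'.le, mul_lt_mul_of_pos_left hδ' hδ]
  have hb : (2 * δ * ‖v‖) ^ 2 + ((2/3 + δ) * ‖v‖) ^ 2 ≤ (9/10 * ‖v‖) ^ 2 := by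
    have := mul_le_mul_of_nonneg_right hscalar (sq_nonneg ‖v‖)
    nlinarith [this]
  have hfin2 : ‖L v‖ ^ 2 ≤ (9/10 * ‖v‖) ^ 2 := hfin.trans hb
  exact (pow_le_pow_iff_left₀ (norm_nonneg _) (by positivity) (two_ne_zero)).1 hfin2

end

set_option maxHeartbeats 1000000 in
/-- the Hanzawa transformation
`Φ(x) = x + χ(|x|−1) u(x) x/|x|` built from a cut-off `χ` (with `χ = 1` for `|τ| ≤ δ`,
`χ = 0` for `|τ| ≥ 3δ`, `0 ≤ χ ≤ 1`, `|χ'| ≤ 2/(3δ)`) and a C¹ function `u` with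
`‖u‖_{C¹} < δ`, `0 < δ < 1/6`, is a C¹ diffeomorphism of `ℝ³` onto itself which is the
identity whenever `dist(x, S²) = ||x|−1| > 3δ`. -/
theorem stmt_10 (δ : ℝ) (hδ : 0 < δ) (hδ' : δ < 1/6)
    (χ : ℝ → ℝ) (hχs : ContDiff ℝ (⊤ : ℕ∞) χ)
    (hχ01 : ∀ τ : ℝ, 0 ≤ χ τ ∧ χ τ ≤ 1)
    (hχ1 : ∀ τ : ℝ, |τ| ≤ δ → χ τ = 1)
    (hχ0 : ∀ τ : ℝ, 3 * δ ≤ |τ| → χ τ = 0)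
    (hχ' : ∀ τ : ℝ, |deriv χ τ| ≤ 2 / (3 * δ))
    (u : EuclideanSpace ℝ (Fin 3) → ℝ) (hu : ContDiff ℝ 1 u)
    (husmall : ∀ x, |u x| < δ ∧ ‖fderiv ℝ u x‖ < δ)
    (Φ : EuclideanSpace ℝ (Fin 3) → EuclideanSpace ℝ (Fin 3))
    (hΦ : ∀ x, Φ x = x + (χ (‖x‖ - 1) * u x) • (‖x‖⁻¹ • x)) :
    Function.Bijective Φ ∧ ContDiff ℝ 1 Φ ∧
      (∃ Ψ : EuclideanSpace ℝ (Fin 3) → EuclideanSpace ℝ (Fin 3),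
        ContDiff ℝ 1 Ψ ∧ Function.LeftInverse Ψ Φ ∧ Function.RightInverse Ψ Φ) ∧
      (∀ x, 3 * δ < |‖x‖ - 1| → Φ x = x) := by
  set h : EuclideanSpace ℝ (Fin 3) → EuclideanSpace ℝ (Fin 3) :=
    fun y => (χ (‖y‖ - 1) * u y) • (‖y‖⁻¹ • y) with hh
  have hΦeq : Φ = fun x => x + h x := funext hΦ
  -- vanishing of χ ∘ (‖·‖ - 1) near the origin
  have hvan : ∀ y : EuclideanSpace ℝ (Fin 3), ‖y‖ < 1 - 3 * δ → χ (‖y‖ - 1) = 0 := by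
    intro y hy
    apply hχ0
    rw [abs_of_neg (by linarith : ‖y‖ - 1 < 0)]
    linarith
  -- the derivative bound everywhere
  have key : ∀ x, ∃ L : EuclideanSpace ℝ (Fin 3) →L[ℝ] EuclideanSpace ℝ (Fin 3), HasFDerivAt h L x ∧ ‖L‖ ≤ 9/10 := by
    intro x
    rcases lt_or_ge ‖x‖ (1 - 3 * δ) with hc | hc
    · refine ⟨0, ?_, by rw [norm_zero]; norm_num⟩
      have hev : h =ᶠ[nhds x] fun _ => 0 := by
        have hop : IsOpen {y : EuclideanSpace ℝ (Fin 3) | ‖y‖ < 1 - 3 * δ} :=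
          isOpen_lt continuous_norm continuous_const
        filter_upwards [hop.mem_nhds hc] with y hy
        simp only [hh, hvan y hy, zero_mul, zero_smul]
      exact (hasFDerivAt_const (0 : EuclideanSpace ℝ (Fin 3)) x).congr_of_eventuallyEq hev
    · exact aux_far δ hδ hδ' χ hχs hχ01 hχ' u hu husmall (le_trans (by linarith) hc)
  -- Lipschitz bound
  have lip : ∀ x y : EuclideanSpace ℝ (Fin 3), ‖h x - h y‖ ≤ 9/10 * ‖x - y‖ := by
    intro x y
    exact Convex.norm_image_sub_le_of_norm_hasFDerivWithin_le
      (f' := fun z => (key z).choose)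
      (fun z _ => ((key z).choose_spec.1).hasFDerivWithinAt)
      (fun z _ => (key z).choose_spec.2) convex_univ (Set.mem_univ y) (Set.mem_univ x)
  -- injectivity
  have hinj : Function.Injective Φ := by
    intro a b hab
    rw [hΦeq] at hab
    simp only at hab
    have h1 : a - b = h b - h a := by
      rw [sub_eq_sub_iff_add_eq_add, hab]
      exact add_comm _ _
    have h2 : ‖a - b‖ ≤ 9/10 * ‖a - b‖ := by
      calc ‖a - b‖ = ‖h b - h a‖ := by rw [h1]
      _ ≤ 9/10 * ‖b - a‖ := lip b a
      _ = 9/10 * ‖a - b‖ := by rw [norm_sub_rev]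
    have h3 : ‖a - b‖ ≤ 0 := by linarith
    have h4 : a - b = 0 := by
      have := le_antisymm h3 (norm_nonneg _); rwa [norm_eq_zero] at this
    exact sub_eq_zero.1 h4
  -- surjectivity
  have hsurj : Function.Surjective Φ := by
    intro y
    set T : EuclideanSpace ℝ (Fin 3) → EuclideanSpace ℝ (Fin 3) := fun z => y - h z with hT
    have hTl : LipschitzWith (9/10 : NNReal) T := by
      apply LipschitzWith.of_dist_le_mul
      intro a b
      simp only [hT, dist_eq_norm]
      have e1 : y - h a - (y - h b) = h b - h a := by abel
      rw [e1]
      calc ‖h b - h a‖ ≤ 9/10 * ‖b - a‖ := lip b a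
      _ = 9/10 * ‖a - b‖ := by rw [norm_sub_rev]
      _ = ((9/10 : NNReal) : ℝ) * ‖a - b‖ := by norm_num
    have hcon : ContractingWith (9/10 : NNReal) T :=
      ⟨by rw [← NNReal.coe_lt_coe]; push_cast; norm_num, hTl⟩
    obtain ⟨z, hz, -⟩ := hcon.exists_fixedPoint 0 (edist_ne_top _ _)
    refine ⟨z, ?_⟩
    have hz' : y - h z = z := hz
    rw [hΦeq]
    show z + h z = y
    have h5 : y - h z + h z = z + h z := congrArg (· + h z) hz'
    rw [← h5, sub_add_cancel]
  have hbij : Function.Bijective Φ := ⟨hinj, hsurj⟩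
  -- smoothness of Φ
  have hΦc : ContDiff ℝ 1 Φ := by
    rw [contDiff_iff_contDiffAt]
    intro x
    rcases lt_or_ge ‖x‖ (1 - 3 * δ) with hc | hc
    · have hev : Φ =ᶠ[nhds x] id := by
        have hop : IsOpen {y : EuclideanSpace ℝ (Fin 3) | ‖y‖ < 1 - 3 * δ} :=
          isOpen_lt continuous_norm continuous_const
        filter_upwards [hop.mem_nhds hc] with y hy
        rw [hΦeq]
        simp only [hh, hvan y hy, zero_mul, zero_smul, add_zero, id_eq]
      exact contDiffAt_id.congr_of_eventuallyEq hev
    · have hx : x ≠ 0 := by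
        intro h0
        rw [h0, norm_zero] at hc
        linarith
      have cn : ContDiffAt ℝ 1 (fun y : EuclideanSpace ℝ (Fin 3) => ‖y‖) x :=
        contDiffAt_norm ℝ hx
      have cχ : ContDiffAt ℝ 1 (fun y : EuclideanSpace ℝ (Fin 3) => χ (‖y‖ - 1)) x :=
        ((hχs.of_le (by simp)).contDiffAt).comp x (cn.sub contDiffAt_const)
      have cF : ContDiffAt ℝ 1 (fun y : EuclideanSpace ℝ (Fin 3) => χ (‖y‖ - 1) * u y) x :=
        cχ.mul hu.contDiffAt
      have cg : ContDiffAt ℝ 1 (fun y : EuclideanSpace ℝ (Fin 3) => ‖y‖⁻¹ • y) x := by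
        have : ContDiffAt ℝ 1 (fun y : EuclideanSpace ℝ (Fin 3) => ‖y‖⁻¹) x :=
          cn.inv (norm_ne_zero_iff.2 hx)
        exact this.smul contDiffAt_id
      rw [hΦeq]
      exact contDiffAt_id.add (cF.smul cg)
  -- the inverse
  set e : EuclideanSpace ℝ (Fin 3) ≃ EuclideanSpace ℝ (Fin 3) := Equiv.ofBijective Φ hbij
    with he
  set Ψ : EuclideanSpace ℝ (Fin 3) → EuclideanSpace ℝ (Fin 3) := ⇑e.symm with hΨ
  have hright : Function.RightInverse Ψ Φ := fun y => e.apply_symm_apply y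
  have hleft : Function.LeftInverse Ψ Φ := fun a => e.symm_apply_apply a
  have hΨc : ContDiff ℝ 1 Ψ := by
    rw [contDiff_iff_contDiffAt]
    intro y
    set a : EuclideanSpace ℝ (Fin 3) := Ψ y with ha
    have hay : Φ a = y := hright y
    obtain ⟨L, hL, hLn⟩ := key a
    have hunit : ‖-L‖ < 1 := by rw [norm_neg]; exact lt_of_le_of_lt hLn (by norm_num)
    set U : (EuclideanSpace ℝ (Fin 3) →L[ℝ] EuclideanSpace ℝ (Fin 3))ˣ :=
      Units.oneSub (-L) hunit with hU
    set f' : EuclideanSpace ℝ (Fin 3) ≃L[ℝ] EuclideanSpace ℝ (Fin 3) :=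
      ContinuousLinearEquiv.ofUnit U with hf'
    have hcoe : (f' : EuclideanSpace ℝ (Fin 3) →L[ℝ] EuclideanSpace ℝ (Fin 3))
        = ContinuousLinearMap.id ℝ (EuclideanSpace ℝ (Fin 3)) + L := by
      ext v
      simp [hf', hU, Units.oneSub, sub_neg_eq_add]
      rfl
    have hfd : HasFDerivAt Φ (f' : EuclideanSpace ℝ (Fin 3) →L[ℝ] EuclideanSpace ℝ (Fin 3)) a := by
      rw [hcoe, hΦeq]
      exact (hasFDerivAt_id a).add hL
    have hΦa : ContDiffAt ℝ 1 Φ a := hΦc.contDiffAt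
    have hli : ContDiffAt ℝ 1 (hΦa.localInverse hfd one_ne_zero) y := by
      rw [← hay]
      exact hΦa.to_localInverse hfd one_ne_zero
    have hevr : ∀ᶠ z in nhds y, Φ ((hΦa.localInverse hfd one_ne_zero) z) = z := by
      rw [← hay]
      exact (hΦa.hasStrictFDerivAt' hfd one_ne_zero).eventually_right_inverse
    have hEq : Ψ =ᶠ[nhds y] (hΦa.localInverse hfd one_ne_zero) := by
      filter_upwards [hevr] with z hz
      exact hinj (by rw [hright z, hz])
    exact hli.congr_of_eventuallyEq hEq
  refine ⟨hbij, hΦc, ⟨Ψ, hΨc, hleft, hright⟩, ?_⟩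
  intro x hx
  rw [hΦ x, hχ0 _ hx.le]
  simp
end

section
/- The translations of ℝ³ act on graphs over the sphere: for sufficiently small τ, δ > 0, for each z, w ∈ ℝ³ with |z|, |w|, |z+w| < τ and each ρ ∈ C¹(S²) with ‖ρ‖_{C¹} < δ, the operator S_z^* defined by 'the translate by z of the surface r = 1+ρ(ω) is the surface r = 1 + S_z^*(ρ)(ω)' is well defined and satisfies S_z^* ∘ S_w^* = S_{z+w}^*, S_0^* = id, and (S_z^*)^{-1} = S_{−z}^*. -/
/-!
A point `y ≠ 0` lies on `Γ_ρ` iff `‖y‖ - ρ(y/‖y‖) = 1`. When `|ρ| < 1/100` and `ρ` is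
`1/100`-Lipschitz, this quantity crosses the value `1` on every ray `r ↦ r • ω - v` with `v`
small (intermediate value theorem), and it crosses it only once: comparing two crossings,
`‖y‖²` grows along the ray at rate almost `2`, while `ρ(y/‖y‖)` moves by at most `1/40` of
the distance travelled. So every ray from the origin meets `Γ_ρ + z` exactly once, for
`‖z‖ ≤ 1/50`, and `S_z^*(ρ)` is the radius of that intersection minus one. Since this radius
depends only on the surface `Γ_ρ + z`, the group laws reduce to `(Γ_ρ + w) + z = Γ_ρ + (z + w)`.
-/

open Set

variable {F : Type*} [NormedAddCommGroup F] {ρ : F → ℝ}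

section NormedSpace

variable [NormedSpace ℝ F]

def graphOverSphere (ρ : F → ℝ) : Set F := {y | ∃ ω, ‖ω‖ = 1 ∧ y = (1 + ρ ω) • ω}

open Classical in
/-- The radius at which the open ray through `ω` meets `M`, meaningful when it meets it exactly
once (junk value `0` when it misses `M`). -/
noncomputable def radialFunction (M : Set F) (ω : F) : ℝ :=
  if h : ∃ r : ℝ, 0 < r ∧ r • ω ∈ M then h.choose else 0

/-- The paper's `S_z^*(ρ)`. -/
noncomputable def translateGraph (z : F) (ρ : F → ℝ) (ω : F) : ℝ :=
  radialFunction ((· + z) '' graphOverSphere ρ) ω - 1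

theorem radialFunction_spec {M : Set F} {ω : F} (h : ∃ r : ℝ, 0 < r ∧ r • ω ∈ M) :
    0 < radialFunction M ω ∧ radialFunction M ω • ω ∈ M := by
  rw [radialFunction, dif_pos h]
  exact h.choose_spec

theorem radialFunction_eq {M : Set F} {ω : F} {r : ℝ} (h : ∃! r : ℝ, 0 < r ∧ r • ω ∈ M)
    (hr : 0 < r) (hrM : r • ω ∈ M) : radialFunction M ω = r :=
  h.unique (radialFunction_spec h.exists) ⟨hr, hrM⟩

theorem setOf_radialFunction_smul_eq {M : Set F} (h0 : (0 : F) ∉ M)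
    (h : ∀ ω : F, ‖ω‖ = 1 → ∃! r : ℝ, 0 < r ∧ r • ω ∈ M) :
    {y | ∃ ω : F, ‖ω‖ = 1 ∧ y = radialFunction M ω • ω} = M := by
  ext y
  constructor
  · rintro ⟨ω, hω, rfl⟩
    exact (radialFunction_spec (h ω hω).exists).2
  · intro hy
    have hy0 : y ≠ 0 := ne_of_mem_of_not_mem hy h0
    have hpos : 0 < ‖y‖ := norm_pos_iff.2 hy0
    have hω : ‖‖y‖⁻¹ • y‖ = 1 := norm_smul_inv_norm hy0
    have hyω : ‖y‖ • ‖y‖⁻¹ • y = y := smul_inv_smul₀ hpos.ne' y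
    refine ⟨‖y‖⁻¹ • y, hω, ?_⟩
    rw [radialFunction_eq (h _ hω) hpos (by rwa [hyω]), hyω]

theorem mem_graphOverSphere_iff (hρ : ∀ x, -1 < ρ x) {y : F} :
    y ∈ graphOverSphere ρ ↔ y ≠ 0 ∧ ‖y‖ = 1 + ρ (‖y‖⁻¹ • y) := by
  constructor
  · rintro ⟨ω, hω, rfl⟩
    have hpos : 0 < 1 + ρ ω := by linarith [hρ ω]
    have hnorm : ‖(1 + ρ ω) • ω‖ = 1 + ρ ω := by
      rw [norm_smul, Real.norm_of_nonneg hpos.le, hω, mul_one]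
    refine ⟨by rw [← norm_pos_iff, hnorm]; exact hpos, ?_⟩
    rw [hnorm, smul_smul, inv_mul_cancel₀ hpos.ne', one_smul]
  · rintro ⟨hy0, hy⟩
    refine ⟨‖y‖⁻¹ • y, norm_smul_inv_norm hy0, ?_⟩
    rw [← hy, smul_inv_smul₀ (norm_ne_zero_iff.2 hy0)]

theorem translateGraph_zero_apply (hρ : ∀ x, -1 < ρ x) {ω : F} (hω : ‖ω‖ = 1) :
    translateGraph 0 ρ ω = ρ ω := by
  have hpos : 0 < 1 + ρ ω := by linarith [hρ ω]
  have huniq : ∃! r : ℝ, 0 < r ∧ r • ω ∈ graphOverSphere ρ := by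
    refine ⟨1 + ρ ω, ⟨hpos, ω, hω, rfl⟩, fun r ⟨hr, hrΓ⟩ => ?_⟩
    have hnorm : ‖r • ω‖ = r := by rw [norm_smul, Real.norm_of_nonneg hr.le, hω, mul_one]
    have := ((mem_graphOverSphere_iff hρ).1 hrΓ).2
    rwa [hnorm, smul_smul, inv_mul_cancel₀ hr.ne', one_smul] at this
  simp only [translateGraph, add_zero, image_id']
  rw [radialFunction_eq huniq hpos ⟨ω, hω, rfl⟩, add_sub_cancel_left]

theorem norm_inv_norm_smul_sub_le {a b : F} (ha : a ≠ 0) (hb : b ≠ 0) :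
    ‖‖b‖⁻¹ • b - ‖a‖⁻¹ • a‖ ≤ 2 * ‖b - a‖ / ‖b‖ := by
  have hunit : ‖‖a‖⁻¹ • a‖ = 1 := norm_smul_inv_norm ha
  have key : ‖b‖⁻¹ • b - ‖a‖⁻¹ • a = ‖b‖⁻¹ • ((b - a) + (‖a‖ - ‖b‖) • ‖a‖⁻¹ • a) := by
    rw [smul_smul (‖a‖ - ‖b‖), sub_mul, mul_inv_cancel₀ (norm_ne_zero_iff.2 ha), smul_add,
      smul_smul, mul_sub, mul_one, ← mul_assoc, inv_mul_cancel₀ (norm_ne_zero_iff.2 hb), one_mul]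
    module
  calc ‖‖b‖⁻¹ • b - ‖a‖⁻¹ • a‖
      = ‖b‖⁻¹ * ‖(b - a) + (‖a‖ - ‖b‖) • ‖a‖⁻¹ • a‖ := by
        rw [key, norm_smul, norm_inv, norm_norm]
    _ ≤ ‖b‖⁻¹ * (‖b - a‖ + ‖b - a‖) := by
        gcongr
        refine (norm_add_le _ _).trans (add_le_add le_rfl ?_)
        rw [norm_smul, hunit, mul_one, Real.norm_eq_abs, norm_sub_rev b a]
        exact abs_norm_sub_norm_le a b
    _ = 2 * ‖b - a‖ / ‖b‖ := by ring

theorem abs_norm_smul_sub_sub_le {ω : F} (hω : ‖ω‖ = 1) {r : ℝ} (hr : 0 ≤ r) (v : F) :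
    |‖r • ω - v‖ - r| ≤ ‖v‖ := by
  simpa [norm_smul, hω, abs_of_nonneg hr] using abs_norm_sub_norm_le (r • ω - v) (r • ω)

theorem exists_smul_sub_mem_graphOverSphere (hc : Continuous ρ)
    (hρ : ∀ x, |ρ x| < 1 / 100) {v ω : F} (hv : ‖v‖ ≤ 1 / 50) (hω : ‖ω‖ = 1) :
    ∃ r : ℝ, 0 < r ∧ r • ω - v ∈ graphOverSphere ρ := by
  have hnorm : ∀ r : ℝ, 0 ≤ r → |‖r • ω - v‖ - r| ≤ 1 / 50 := fun r hr =>
    (abs_norm_smul_sub_sub_le hω hr v).trans hv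
  have hne : ∀ r ∈ Icc (1 / 2 : ℝ) 2, r • ω - v ≠ 0 := fun r hr h0 => by
    have := hnorm r (by linarith [hr.1])
    rw [h0, norm_zero, zero_sub, abs_neg, abs_of_nonneg (by linarith [hr.1])] at this
    linarith [hr.1]
  set f : ℝ → ℝ := fun r => ‖r • ω - v‖ - ρ (‖r • ω - v‖⁻¹ • (r • ω - v))
  have hf : ContinuousOn f (Icc (1 / 2) 2) := by
    have hg : Continuous fun r : ℝ => r • ω - v := by fun_prop
    refine hg.norm.continuousOn.sub (hc.comp_continuousOn ?_)
    exact (hg.norm.continuousOn.inv₀ fun r hr => norm_ne_zero_iff.2 (hne r hr)).smul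
      hg.continuousOn
  have hf_left : f (1 / 2) ≤ 1 := by
    have := abs_le.1 (hnorm (1 / 2) (by norm_num))
    have := abs_lt.1 (hρ (‖(1 / 2 : ℝ) • ω - v‖⁻¹ • ((1 / 2 : ℝ) • ω - v)))
    simp only [f]
    linarith
  have hf_right : 1 ≤ f 2 := by
    have := abs_le.1 (hnorm 2 (by norm_num))
    have := abs_lt.1 (hρ (‖(2 : ℝ) • ω - v‖⁻¹ • ((2 : ℝ) • ω - v)))
    simp only [f]
    linarith
  obtain ⟨r, hr, hfr⟩ := intermediate_value_Icc (by norm_num) hf ⟨hf_left, hf_right⟩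
  refine ⟨r, by linarith [hr.1], ?_⟩
  rw [mem_graphOverSphere_iff fun x => by linarith [abs_lt.1 (hρ x)]]
  exact ⟨hne r hr, by simp only [f] at hfr; linarith⟩

theorem zero_notMem_image_add_graphOverSphere (hρ : ∀ x, |ρ x| < 1 / 100) {z : F}
    (hz : ‖z‖ ≤ 1 / 50) : (0 : F) ∉ (· + z) '' graphOverSphere ρ := by
  rintro ⟨y, ⟨ω, hω, rfl⟩, hy⟩
  have hpos : 0 < 1 + ρ ω := by linarith [abs_lt.1 (hρ ω)]
  have : ‖(1 + ρ ω) • ω‖ = ‖z‖ := by rw [eq_neg_of_add_eq_zero_left hy, norm_neg]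
  rw [norm_smul, Real.norm_of_nonneg hpos.le, hω, mul_one] at this
  linarith [abs_lt.1 (hρ ω)]

end NormedSpace

section InnerProductSpace

variable [InnerProductSpace ℝ F]

open RealInnerProductSpace

theorem norm_smul_sub_sq {ω : F} (hω : ‖ω‖ = 1) (r : ℝ) (v : F) :
    ‖r • ω - v‖ ^ 2 = r ^ 2 - 2 * r * ⟪ω, v⟫ + ‖v‖ ^ 2 := by
  rw [norm_sub_sq_real, norm_smul, real_inner_smul_left, Real.norm_eq_abs, hω, mul_one, sq_abs]
  ring

theorem eq_of_smul_sub_mem_graphOverSphere (hL : LipschitzWith (1 / 100) ρ)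
    (hρ : ∀ x, |ρ x| < 1 / 100) {v ω : F} (hv : ‖v‖ ≤ 1 / 50) (hω : ‖ω‖ = 1) {r₁ r₂ : ℝ}
    (hr₁ : 0 < r₁) (hr₂ : 0 < r₂) (h₁ : r₁ • ω - v ∈ graphOverSphere ρ)
    (h₂ : r₂ • ω - v ∈ graphOverSphere ρ) : r₁ = r₂ := by
  have hρ' : ∀ x, -1 < ρ x := fun x => by linarith [abs_lt.1 (hρ x)]
  set a₁ := r₁ • ω - v
  set a₂ := r₂ • ω - v
  obtain ⟨ha₁, hna₁⟩ := (mem_graphOverSphere_iff hρ').1 h₁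
  obtain ⟨ha₂, hna₂⟩ := (mem_graphOverSphere_iff hρ').1 h₂
  have hρ₁ := abs_lt.1 (hρ (‖a₁‖⁻¹ • a₁))
  have hρ₂ := abs_lt.1 (hρ (‖a₂‖⁻¹ • a₂))
  have hr₁' := abs_le.1 ((abs_norm_smul_sub_sub_le hω hr₁.le v).trans hv)
  have hr₂' := abs_le.1 ((abs_norm_smul_sub_sub_le hω hr₂.le v).trans hv)
  have hI : ⟪ω, v⟫ ≤ 1 / 50 := by
    have := real_inner_le_norm ω v
    rw [hω, one_mul] at this
    linarith
  have hdist : ‖a₂ - a₁‖ = |r₂ - r₁| := by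
    rw [show a₂ - a₁ = (r₂ - r₁) • ω by simp only [a₁, a₂, sub_smul]; abel, norm_smul,
      Real.norm_eq_abs, hω, mul_one]
  have hnorm_diff : |‖a₂‖ - ‖a₁‖| ≤ |r₂ - r₁| / 40 := by
    have hlip := hL.dist_le_mul (‖a₂‖⁻¹ • a₂) (‖a₁‖⁻¹ • a₁)
    rw [Real.dist_eq, dist_eq_norm] at hlip
    have hproj := norm_inv_norm_smul_sub_le ha₁ ha₂
    rw [hdist] at hproj
    have h40 : 2 * |r₂ - r₁| / ‖a₂‖ ≤ 5 / 2 * |r₂ - r₁| := by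
      rw [div_le_iff₀ (by linarith)]
      nlinarith [abs_nonneg (r₂ - r₁)]
    calc |‖a₂‖ - ‖a₁‖| = |ρ (‖a₂‖⁻¹ • a₂) - ρ (‖a₁‖⁻¹ • a₁)| := by
          congr 1; linarith
      _ ≤ 1 / 100 * (5 / 2 * |r₂ - r₁|) := by
        refine hlip.trans ?_
        push_cast
        gcongr
        exact hproj.trans h40
      _ = |r₂ - r₁| / 40 := by ring
  have hsq : |‖a₂‖ - ‖a₁‖| * (‖a₂‖ + ‖a₁‖) = |r₂ - r₁| * (r₁ + r₂ - 2 * ⟪ω, v⟫) := by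
    rw [← abs_of_pos (show 0 < ‖a₂‖ + ‖a₁‖ by linarith), ← abs_mul,
      ← abs_of_pos (show 0 < r₁ + r₂ - 2 * ⟪ω, v⟫ by linarith), ← abs_mul]
    congr 1
    linear_combination norm_smul_sub_sq hω r₂ v - norm_smul_sub_sq hω r₁ v
  have : |r₂ - r₁| * (19 / 10) ≤ |r₂ - r₁| * (3 / 40) := calc
    |r₂ - r₁| * (19 / 10) ≤ |r₂ - r₁| * (r₁ + r₂ - 2 * ⟪ω, v⟫) := by gcongr; linarith
    _ = |‖a₂‖ - ‖a₁‖| * (‖a₂‖ + ‖a₁‖) := hsq.symm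
    _ ≤ |r₂ - r₁| / 40 * 3 := by gcongr; linarith
    _ = |r₂ - r₁| * (3 / 40) := by ring
  have : |r₂ - r₁| = 0 := by linarith [abs_nonneg (r₂ - r₁)]
  exact (sub_eq_zero.1 (abs_eq_zero.1 this)).symm

theorem existsUnique_smul_mem_image_add_graphOverSphere (hL : LipschitzWith (1 / 100) ρ)
    (hρ : ∀ x, |ρ x| < 1 / 100) {z ω : F} (hz : ‖z‖ ≤ 1 / 50) (hω : ‖ω‖ = 1) :
    ∃! r : ℝ, 0 < r ∧ r • ω ∈ (· + z) '' graphOverSphere ρ := by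
  simp only [image_add_right, mem_preimage, ← sub_eq_add_neg]
  obtain ⟨r, hr, hrΓ⟩ := exists_smul_sub_mem_graphOverSphere hL.continuous hρ hz hω
  exact ⟨r, ⟨hr, hrΓ⟩, fun s ⟨hs, hsΓ⟩ =>
    (eq_of_smul_sub_mem_graphOverSphere hL hρ hz hω hr hs hrΓ hsΓ).symm⟩

theorem graphOverSphere_translateGraph (hL : LipschitzWith (1 / 100) ρ)
    (hρ : ∀ x, |ρ x| < 1 / 100) {z : F} (hz : ‖z‖ ≤ 1 / 50) :
    graphOverSphere (translateGraph z ρ) = (· + z) '' graphOverSphere ρ := by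
  simpa [graphOverSphere, translateGraph] using
    setOf_radialFunction_smul_eq (zero_notMem_image_add_graphOverSphere hρ hz)
      fun ω hω => existsUnique_smul_mem_image_add_graphOverSphere hL hρ hz hω

theorem translateGraph_translateGraph (hL : LipschitzWith (1 / 100) ρ)
    (hρ : ∀ x, |ρ x| < 1 / 100) {w : F} (hw : ‖w‖ ≤ 1 / 50) (z : F) :
    translateGraph z (translateGraph w ρ) = translateGraph (z + w) ρ := by
  funext ω
  rw [translateGraph, graphOverSphere_translateGraph hL hρ hw, image_image, translateGraph]
  simp_rw [add_assoc, add_comm w z]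

end InnerProductSpace

/-- the translations of `ℝ³` act on star-shaped graphs over the unit
sphere. For sufficiently small `τ, δ > 0` there is an operator family `S_z^*` such that
for every `z` with `‖z‖ < τ` and every C¹ function `ρ` with `‖ρ‖_{C¹} < δ`, the translate
by `z` of the surface `Γ_ρ = {(1+ρ(ω))ω : ω ∈ S²}` is the graph surface of `S_z^*(ρ)`,
and the (local) group laws `S_z^* ∘ S_w^* = S_{z+w}^*`, `S_0^* = id`,
`(S_z^*)⁻¹ = S_{−z}^*` hold. -/
theorem stmt_14 :
    ∃ τ : ℝ, 0 < τ ∧ ∃ δ : ℝ, 0 < δ ∧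
    ∃ S : EuclideanSpace ℝ (Fin 3) → (EuclideanSpace ℝ (Fin 3) → ℝ) →
          (EuclideanSpace ℝ (Fin 3) → ℝ),
      (∀ z : EuclideanSpace ℝ (Fin 3), ‖z‖ < τ →
        ∀ ρ : EuclideanSpace ℝ (Fin 3) → ℝ, ContDiff ℝ 1 ρ →
          (∀ x, |ρ x| < δ ∧ ‖fderiv ℝ ρ x‖ < δ) →
          {y : EuclideanSpace ℝ (Fin 3) | ∃ ω, ‖ω‖ = 1 ∧ y = (1 + S z ρ ω) • ω}
            = (fun y => y + z) ''
                {y : EuclideanSpace ℝ (Fin 3) | ∃ ω, ‖ω‖ = 1 ∧ y = (1 + ρ ω) • ω}) ∧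
      (∀ z w : EuclideanSpace ℝ (Fin 3), ‖z‖ < τ → ‖w‖ < τ → ‖z + w‖ < τ →
        ∀ ρ : EuclideanSpace ℝ (Fin 3) → ℝ, ContDiff ℝ 1 ρ →
          (∀ x, |ρ x| < δ ∧ ‖fderiv ℝ ρ x‖ < δ) →
          (∀ ω : EuclideanSpace ℝ (Fin 3), ‖ω‖ = 1 →
            S z (S w ρ) ω = S (z + w) ρ ω ∧
            S 0 ρ ω = ρ ω ∧
            S (-z) (S z ρ) ω = ρ ω)) := by
  have lipschitz {ρ : EuclideanSpace ℝ (Fin 3) → ℝ} (hρ : ContDiff ℝ 1 ρ)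
      (hb : ∀ x, |ρ x| < 1 / 100 ∧ ‖fderiv ℝ ρ x‖ < 1 / 100) : LipschitzWith (1 / 100) ρ :=
    lipschitzWith_of_nnnorm_fderiv_le (hρ.differentiable one_ne_zero) fun x => by
      rw [← NNReal.coe_le_coe, coe_nnnorm]
      push_cast
      exact (hb x).2.le
  refine ⟨1 / 50, by norm_num, 1 / 100, by norm_num, translateGraph, ?_, ?_⟩
  · intro z hz ρ hρ hb
    exact graphOverSphere_translateGraph (lipschitz hρ hb) (fun x => (hb x).1) hz.le
  · intro z w hz hw _ ρ hρ hb ω hω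
    have hL := lipschitz hρ hb
    have hρ₁ : ∀ x, |ρ x| < 1 / 100 := fun x => (hb x).1
    have hρ₀ : ∀ x, -1 < ρ x := fun x => by linarith [abs_lt.1 (hρ₁ x)]
    refine ⟨?_, translateGraph_zero_apply hρ₀ hω, ?_⟩
    · rw [translateGraph_translateGraph hL hρ₁ hw.le]
    · rw [translateGraph_translateGraph hL hρ₁ hz.le, neg_add_cancel,
        translateGraph_zero_apply hρ₀ hω]
end
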